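/- arXiv:1704.02641 — 2 statements merged into one kernel-verified Lean document; each statement's English description precedes it below -/
import Mathlib

section
/- For the scalar linear Gaussian Kalman filter, the innovations sequence is white: for j ≠ k, E[ε_j ε_k] = 0. -/
/-!
Let `e k = x k - x̂ k` be the prediction error. It follows the linear recursion
`e (k+1) = a (1 - L k c) e k - a L k v k + w k`, and the innovation is `ε k = c e k + v k`.
By independence, `e k` is uncorrelated with `v m` and `w m` for `m ≥ k`, so `Var (e k)` obeys the
Riccati recursion and equals `Σ_{k|k-1}`. The gain is exactly the one making
`L k (c² Σ_k + r) = c Σ_k`, which kills `cov (ε j, e (j+1)) = a (c Σ_j - L j (c² Σ_j + r))`;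
the recursion then propagates `cov (ε j, e k) = 0` to all `k > j`, whence `cov (ε j, ε k) = 0`.
Everything is centred, so this covariance is `E[ε j ε k]`.
-/

open MeasureTheory ProbabilityTheory
open scoped NNReal

lemma ProbabilityTheory.iIndepFun.indepFun_of_measurable_biSup {Ω ι γ : Type*}
    [MeasurableSpace Ω] {P : Measure Ω} {β : ι → Type*} [mβ : ∀ i, MeasurableSpace (β i)]
    [MeasurableSpace γ] {f : ∀ i, Ω → β i} (hf : ∀ i, Measurable (f i)) (h : iIndepFun f P)
    {S : Set ι} {g : Ω → γ} (hg : Measurable[⨆ i ∈ S, (mβ i).comap (f i)] g) {i : ι}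
    (hi : i ∉ S) : IndepFun g (f i) P := by
  rw [IndepFun_iff_Indep]
  have hS := indep_biSup_compl (fun j => (hf j).comap_le) ((iIndepFun_iff_iIndep _ _ _).1 h) S
  exact indep_of_indep_of_le_right (indep_of_indep_of_le_left hS hg.comap_le)
    (le_biSup (fun j => (mβ j).comap (f j)) (show i ∈ Sᶜ from hi))

namespace ProbabilityTheory.HasLaw

variable {Ω : Type*} [MeasurableSpace Ω] {P : Measure Ω} {X : Ω → ℝ} {μ : ℝ} {v : ℝ≥0}

lemma integral_eq_of_gaussianReal (h : HasLaw X (gaussianReal μ v) P) : P[X] = μ :=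
  h.integral_eq.trans integral_id_gaussianReal

lemma variance_eq_of_gaussianReal (h : HasLaw X (gaussianReal μ v) P) : Var[X; P] = v :=
  h.variance_eq.trans variance_id_gaussianReal

end ProbabilityTheory.HasLaw

section Covariance

variable {Ω : Type*} [MeasurableSpace Ω] {P : Measure Ω} [IsFiniteMeasure P] {X A B C : Ω → ℝ}

lemma covariance_smul_add_left (hX : MemLp X 2 P) (hA : MemLp A 2 P) (hB : MemLp B 2 P)
    (s : ℝ) : cov[s • A + B, X; P] = s * cov[A, X; P] + cov[B, X; P] := by
  rw [covariance_add_left (hA.const_smul s) hB hX, covariance_smul_left]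

lemma covariance_smul_add_smul_add_right (hX : MemLp X 2 P) (hA : MemLp A 2 P)
    (hB : MemLp B 2 P) (hC : MemLp C 2 P) (s t : ℝ) :
    cov[X, s • A + t • B + C; P] = s * cov[X, A; P] + t * cov[X, B; P] + cov[X, C; P] := by
  rw [covariance_add_right hX ((hA.const_smul s).add (hB.const_smul t)) hC,
    covariance_add_right hX (hA.const_smul s) (hB.const_smul t),
    covariance_smul_right, covariance_smul_right]

variable (hA : MemLp A 2 P) (hB : MemLp B 2 P) (hC : MemLp C 2 P)
  (hAB : cov[A, B; P] = 0) (hAC : cov[A, C; P] = 0) (hBC : cov[B, C; P] = 0)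
include hA hB hC hAB hAC hBC

lemma variance_smul_add_smul_add_of_covariance_eq_zero (s t : ℝ) :
    Var[s • A + t • B + C; P] = s ^ 2 * Var[A; P] + t ^ 2 * Var[B; P] + Var[C; P] := by
  have hsA := hA.const_smul s
  have htB := hB.const_smul t
  rw [variance_add (hsA.add htB) hC, variance_add hsA htB, variance_smul, variance_smul,
    covariance_smul_left, covariance_smul_right, covariance_add_left hsA htB hC,
    covariance_smul_left, covariance_smul_left, hAB, hAC, hBC]
  ring

lemma covariance_smul_add_smul_add_smul_add_of_covariance_eq_zero (c s t : ℝ) :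
    cov[c • A + B, s • A + t • B + C; P] = c * s * Var[A; P] + t * Var[B; P] := by
  rw [covariance_smul_add_left ((hA.const_smul s).add (hB.const_smul t) |>.add hC) hA hB,
    covariance_smul_add_smul_add_right hA hA hB hC,
    covariance_smul_add_smul_add_right hB hA hB hC, covariance_self hA.aemeasurable,
    covariance_self hB.aemeasurable, covariance_comm B A, hAB, hAC, hBC]
  ring

end Covariance

section LinearRecursion

variable {Ω : Type*} [MeasurableSpace Ω] {P : Measure Ω} {e v w : ℕ → Ω → ℝ} {α β : ℕ → ℝ}
  (he : ∀ k, e (k + 1) = α k • e k + β k • v k + w k)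
include he

lemma memLp_of_linear_recursion {p : ENNReal} (he0 : MemLp (e 0) p P)
    (hv : ∀ k, MemLp (v k) p P) (hw : ∀ k, MemLp (w k) p P) (k : ℕ) : MemLp (e k) p P := by
  induction k with
  | zero => exact he0
  | succ k ih => rw [he]; exact ((ih.const_smul _).add ((hv k).const_smul _)).add (hw k)

lemma integral_eq_zero_of_linear_recursion (he0 : P[e 0] = 0) (hv : ∀ k, P[v k] = 0)
    (hw : ∀ k, P[w k] = 0) (hei : ∀ k, Integrable (e k) P) (hvi : ∀ k, Integrable (v k) P)
    (hwi : ∀ k, Integrable (w k) P) (k : ℕ) : P[e k] = 0 := by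
  induction k with
  | zero => exact he0
  | succ k ih =>
    rw [he, integral_add' (((hei k).smul _).add ((hvi k).smul _)) (hwi k),
      integral_add' ((hei k).smul _) ((hvi k).smul _)]
    simp only [Pi.smul_apply, integral_smul, ih, hv, hw, smul_zero, add_zero]

lemma covariance_eq_zero_of_linear_recursion [IsFiniteMeasure P] {Y : Ω → ℝ}
    (hY : MemLp Y 2 P) (hel : ∀ k, MemLp (e k) 2 P) (hvl : ∀ k, MemLp (v k) 2 P)
    (hwl : ∀ k, MemLp (w k) 2 P) {n : ℕ} (hn : cov[Y, e n; P] = 0)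
    (hv : ∀ m, n ≤ m → cov[Y, v m; P] = 0) (hw : ∀ m, n ≤ m → cov[Y, w m; P] = 0) {m : ℕ}
    (hm : n ≤ m) : cov[Y, e m; P] = 0 := by
  induction m, hm using Nat.le_induction with
  | base => exact hn
  | succ m hm ih =>
    rw [he, covariance_smul_add_smul_add_right hY (hel m) (hvl m) (hwl m), ih, hv m hm, hw m hm]
    ring

end LinearRecursion

section NoisePast

variable {Ω : Type*} {w v : ℕ → Ω → ℝ} {x₀ : Ω → ℝ}

abbrev noiseFamily (w v : ℕ → Ω → ℝ) (x₀ : Ω → ℝ) : ℕ ⊕ ℕ ⊕ Unit → Ω → ℝ :=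
  Sum.elim w (Sum.elim v fun _ => x₀)

/-- The indices of `x₀` and of `w i`, `v i` for `i < k`, in the encoding of `noiseFamily`. -/
def noiseIndexBefore (k : ℕ) : Set (ℕ ⊕ ℕ ⊕ Unit) :=
  {i | Sum.elim (· < k) (Sum.elim (· < k) fun _ => True) i}

abbrev noisePast (w v : ℕ → Ω → ℝ) (x₀ : Ω → ℝ) (k : ℕ) : MeasurableSpace Ω :=
  ⨆ i ∈ noiseIndexBefore k, .comap (noiseFamily w v x₀ i) inferInstance

lemma noisePast_mono : Monotone (noisePast w v x₀) := by
  intro k l hkl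
  refine biSup_mono fun i hi => ?_
  rcases i with i | i | u
  exacts [lt_of_lt_of_le hi hkl, lt_of_lt_of_le hi hkl, trivial]

lemma measurable_noisePast {k : ℕ} {i : ℕ ⊕ ℕ ⊕ Unit} (hi : i ∈ noiseIndexBefore k) :
    Measurable[noisePast w v x₀ k] (noiseFamily w v x₀ i) :=
  measurable_iff_comap_le.2 <|
    le_biSup (fun i => MeasurableSpace.comap (noiseFamily w v x₀ i) inferInstance) hi

lemma measurable_noisePast_of_linear_recursion {e : ℕ → Ω → ℝ} {α β : ℕ → ℝ}
    (he : ∀ k, e (k + 1) = α k • e k + β k • v k + w k)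
    (he0 : Measurable[.comap x₀ inferInstance] (e 0)) (k : ℕ) :
    Measurable[noisePast w v x₀ k] (e k) := by
  induction k with
  | zero =>
    exact he0.mono (measurable_noisePast (i := .inr (.inr ())) trivial).comap_le le_rfl
  | succ k ih =>
    have hv : Measurable[noisePast w v x₀ (k + 1)] (v k) :=
      measurable_noisePast (i := .inr (.inl k)) k.lt_succ_self
    have hw : Measurable[noisePast w v x₀ (k + 1)] (w k) :=
      measurable_noisePast (i := .inl k) k.lt_succ_self
    rw [he]
    exact ((ih.mono (noisePast_mono k.le_succ) le_rfl).const_smul _ |>.add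
      (hv.const_smul _)).add hw

end NoisePast

structure IsCausallyDriven {Ω : Type*} [MeasurableSpace Ω] (P : Measure Ω)
    (e v w : ℕ → Ω → ℝ) : Prop where
  memLp_state : ∀ k, MemLp (e k) 2 P
  memLp_v : ∀ k, MemLp (v k) 2 P
  memLp_w : ∀ k, MemLp (w k) 2 P
  integral_state : ∀ k, P[e k] = 0
  integral_v : ∀ k, P[v k] = 0
  covariance_state_v : ∀ k m, k ≤ m → cov[e k, v m; P] = 0
  covariance_state_w : ∀ k m, k ≤ m → cov[e k, w m; P] = 0
  covariance_v_v : ∀ k m, k ≠ m → cov[v k, v m; P] = 0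
  covariance_v_w : ∀ k m, cov[v k, w m; P] = 0

lemma IsCausallyDriven.of_iIndepFun {Ω : Type*} [MeasurableSpace Ω] {P : Measure Ω}
    [IsFiniteMeasure P] {e v w : ℕ → Ω → ℝ} {x₀ : Ω → ℝ} {α β : ℕ → ℝ}
    (he : ∀ k, e (k + 1) = α k • e k + β k • v k + w k)
    (he0m : Measurable[.comap x₀ inferInstance] (e 0)) (hwm : ∀ k, Measurable (w k))
    (hvm : ∀ k, Measurable (v k)) (hx₀ : Measurable x₀)
    (hindep : iIndepFun (noiseFamily w v x₀) P) (he0l : MemLp (e 0) 2 P)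
    (hvl : ∀ k, MemLp (v k) 2 P) (hwl : ∀ k, MemLp (w k) 2 P) (he0i : P[e 0] = 0)
    (hvi : ∀ k, P[v k] = 0) (hwi : ∀ k, P[w k] = 0) : IsCausallyDriven P e v w := by
  have hel := memLp_of_linear_recursion he he0l hvl hwl
  have hF : ∀ i, Measurable (noiseFamily w v x₀ i) := by
    rintro (i | i | _)
    exacts [hwm i, hvm i, hx₀]
  have hfuture k {i} (hi : i ∉ noiseIndexBefore k) : IndepFun (e k) (noiseFamily w v x₀ i) P :=
    hindep.indepFun_of_measurable_biSup hF (measurable_noisePast_of_linear_recursion he he0m k) hi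
  have hvv {k m} (hkm : k ≠ m) : IndepFun (v k) (v m) P :=
    hindep.indepFun (i := .inr (.inl k)) (j := .inr (.inl m)) (by simpa using hkm)
  have hvw k m : IndepFun (v k) (w m) P :=
    hindep.indepFun (i := .inr (.inl k)) (j := .inl m) (by simp)
  exact
    { memLp_state := hel
      memLp_v := hvl
      memLp_w := hwl
      integral_state := integral_eq_zero_of_linear_recursion he he0i hvi hwi
        (fun k => (hel k).integrable one_le_two) (fun k => (hvl k).integrable one_le_two)
        (fun k => (hwl k).integrable one_le_two)
      integral_v := hvi
      covariance_state_v := fun k m hkm =>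
        (hfuture k (i := .inr (.inl m)) hkm.not_gt).covariance_eq_zero (hel k) (hvl m)
      covariance_state_w := fun k m hkm =>
        (hfuture k (i := .inl m) hkm.not_gt).covariance_eq_zero (hel k) (hwl m)
      covariance_v_v := fun k m hkm => (hvv hkm).covariance_eq_zero (hvl k) (hvl m)
      covariance_v_w := fun k m => (hvw k m).covariance_eq_zero (hvl k) (hwl m) }

lemma kalman_gain_mul {c S r L : ℝ} (hS : 0 ≤ S) (hr : 0 ≤ r)
    (hL : L = S * c / (c ^ 2 * S + r)) : L * (c ^ 2 * S + r) = c * S := by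
  by_cases hden : c ^ 2 * S + r = 0
  -- then `L = 0` (division by zero), but also `c * S = 0`
  · have hcS : (c * S) ^ 2 = 0 := by nlinarith [mul_nonneg (sq_nonneg c) hS]
    rw [hden, mul_zero, pow_eq_zero_iff two_ne_zero |>.1 hcS]
  · rw [hL, div_mul_cancel₀ _ hden, mul_comm]

section KalmanError

variable {Ω : Type*} [MeasurableSpace Ω] {P : Measure Ω} [IsProbabilityMeasure P]
  {e v w : ℕ → Ω → ℝ} {a c : ℝ} {L : ℕ → ℝ}
  (he : ∀ k, e (k + 1) = (a * (1 - L k * c)) • e k + (-(a * L k)) • v k + w k)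
  (hn : IsCausallyDriven P e v w)
include he hn

lemma variance_kalman_error {r q : ℝ} {Sp : ℕ → ℝ} (hr : 0 ≤ r)
    (hv : ∀ k, Var[v k; P] = r) (hw : ∀ k, Var[w k; P] = q) (hS0 : Var[e 0; P] = Sp 0)
    (hL : ∀ k, L k = Sp k * c / (c ^ 2 * Sp k + r))
    (hSp : ∀ k, Sp (k + 1) = a ^ 2 * ((1 - L k * c) * Sp k) + q) (k : ℕ) :
    Var[e k; P] = Sp k := by
  induction k with
  | zero => exact hS0
  | succ k ih =>
    have hgain := kalman_gain_mul (ih ▸ variance_nonneg _ _) hr (hL k)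
    rw [he, variance_smul_add_smul_add_of_covariance_eq_zero (hn.memLp_state k) (hn.memLp_v k)
      (hn.memLp_w k) (hn.covariance_state_v k k le_rfl) (hn.covariance_state_w k k le_rfl)
      (hn.covariance_v_w k k), ih, hv, hw, hSp]
    linear_combination (a ^ 2 * L k) * hgain

lemma integral_kalman_innovation_mul_eq_zero {j k : ℕ}
    (hL : L j = Var[e j; P] * c / (c ^ 2 * Var[e j; P] + Var[v j; P])) (hjk : j < k) :
    ∫ ω, (c * e j ω + v j ω) * (c * e k ω + v k ω) ∂P = 0 := by
  obtain ⟨hel, hvl, hwl, hei, hvi, hev, hew, hvv, hvw⟩ := hn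
  have hεl : MemLp (c • e j + v j) 2 P := ((hel j).const_smul c).add (hvl j)
  have hnext : cov[c • e j + v j, e (j + 1); P] = 0 := by
    rw [he, covariance_smul_add_smul_add_smul_add_of_covariance_eq_zero (hel j) (hvl j) (hwl j)
      (hev j j le_rfl) (hew j j le_rfl) (hvw j j)]
    linear_combination (-a) * kalman_gain_mul (variance_nonneg _ _) (variance_nonneg _ _) hL
  have hfuture : cov[c • e j + v j, e k; P] = 0 :=
    covariance_eq_zero_of_linear_recursion he hεl hel hvl hwl hnext
      (fun m hm => by rw [covariance_smul_add_left (hvl m) (hel j) (hvl j), hev j m (by omega),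
        hvv j m (by omega), mul_zero, add_zero])
      (fun m hm => by rw [covariance_smul_add_left (hwl m) (hel j) (hvl j), hew j m (by omega),
        hvw j m, mul_zero, add_zero]) hjk
  have hcov : cov[c • e j + v j, c • e k + v k; P] = 0 := by
    rw [covariance_add_right hεl ((hel k).const_smul c) (hvl k), covariance_smul_right,
      hfuture, covariance_smul_add_left (hvl k) (hel j) (hvl j), hev j k hjk.le,
      hvv j k hjk.ne]
    ring
  have hmean : P[c • e j + v j] = 0 := by
    rw [integral_add' ((hel j).integrable one_le_two |>.smul c) ((hvl j).integrable one_le_two)]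
    simp only [Pi.smul_apply, integral_smul, hei j, hvi j, smul_zero, add_zero]
  rw [covariance_eq_sub hεl (((hel k).const_smul c).add (hvl k)), hmean, zero_mul,
    sub_zero] at hcov
  simpa using hcov

end KalmanError

/-- For the scalar linear Gaussian system `x_{k+1} = a x_k + w_k`, `y_k = c x_k + v_k`
with the Kalman filter, the innovations sequence `ε_k = y_k - c x̂_{k|k-1}` is white:
for `j ≠ k`, `E[ε_j ε_k] = 0`. -/
theorem stmt_6 {Ω : Type*} [MeasurableSpace Ω] (P : Measure Ω) [IsProbabilityMeasure P]
    (a c : ℝ) (q r S0 : ℝ≥0) (xhat0 : ℝ)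
    (x w v y : ℕ → Ω → ℝ) (xhat : ℕ → Ω → ℝ) (Sp : ℕ → ℝ) (L : ℕ → ℝ)
    (hmeas : ∀ k, Measurable (x k) ∧ Measurable (w k) ∧ Measurable (v k))
    (hdyn : ∀ k, ∀ ω, x (k + 1) ω = a * x k ω + w k ω)
    (hout : ∀ k, ∀ ω, y k ω = c * x k ω + v k ω)
    (hw : ∀ k, Measure.map (w k) P = ProbabilityTheory.gaussianReal 0 q)
    (hv : ∀ k, Measure.map (v k) P = ProbabilityTheory.gaussianReal 0 r)
    (hx0 : Measure.map (x 0) P = ProbabilityTheory.gaussianReal xhat0 S0)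
    (hindep : ProbabilityTheory.iIndepFun
      (Sum.elim w (Sum.elim v (fun _ : Unit => x 0))) P)
    (hxhat0 : xhat 0 = fun _ => xhat0) (hS0 : Sp 0 = S0)
    (hL : ∀ k, L k = Sp k * c / (c ^ 2 * Sp k + r))
    (hxhat : ∀ k, ∀ ω, xhat (k + 1) ω =
      a * (xhat k ω + L k * (y k ω - c * xhat k ω)))
    (hSp : ∀ k, Sp (k + 1) = a ^ 2 * ((1 - L k * c) * Sp k) + q) :
    ∀ j k, j ≠ k →
      (∫ ω, (y j ω - c * xhat j ω) * (y k ω - c * xhat k ω) ∂P) = 0 := by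
  set e : ℕ → Ω → ℝ := fun k => x k - xhat k
  have he k : e (k + 1) = (a * (1 - L k * c)) • e k + (-(a * L k)) • v k + w k := by
    ext ω
    simp only [e, Pi.add_apply, Pi.sub_apply, Pi.smul_apply, smul_eq_mul, hdyn, hxhat, hout]
    ring
  have hwL k : HasLaw (w k) (gaussianReal 0 q) P := ⟨(hmeas k).2.1.aemeasurable, hw k⟩
  have hvL k : HasLaw (v k) (gaussianReal 0 r) P := ⟨(hmeas k).2.2.aemeasurable, hv k⟩
  have he0 : e 0 = fun ω => x 0 ω - xhat0 := by simp [e, hxhat0, Pi.sub_def]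
  have he0L : HasLaw (e 0) (gaussianReal 0 S0) P := by
    simpa [he0] using gaussianReal_sub_const ⟨(hmeas 0).1.aemeasurable, hx0⟩ xhat0
  have hn : IsCausallyDriven P e v w := .of_iIndepFun he
    (he0 ▸ (comap_measurable (x 0)).sub_const xhat0) (fun k => (hmeas k).2.1)
    (fun k => (hmeas k).2.2) (hmeas 0).1 hindep he0L.hasGaussianLaw.memLp_two
    (fun k => (hvL k).hasGaussianLaw.memLp_two) (fun k => (hwL k).hasGaussianLaw.memLp_two)
    he0L.integral_eq_of_gaussianReal (fun k => (hvL k).integral_eq_of_gaussianReal)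
    (fun k => (hwL k).integral_eq_of_gaussianReal)
  have hvar := variance_kalman_error he hn r.coe_nonneg
    (fun k => (hvL k).variance_eq_of_gaussianReal) (fun k => (hwL k).variance_eq_of_gaussianReal)
    (he0L.variance_eq_of_gaussianReal.trans hS0.symm) hL hSp
  intro j k hjk
  wlog hlt : j < k generalizing j k
  · simp_rw [mul_comm (y j _ - _)]
    exact this k j hjk.symm (by omega)
  have hinnov k ω : y k ω - c * xhat k ω = c * e k ω + v k ω := by
    simp only [e, Pi.sub_apply, hout]
    ring
  simp_rw [hinnov]
  exact integral_kalman_innovation_mul_eq_zero he hn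
    (by rw [hvar, (hvL j).variance_eq_of_gaussianReal, hL]) hlt
end

section
/- The variance of a standard normal random variable conditioned on lying in an interval (z_l, z_u] of positive probability is strictly less than 1 (the unconditional variance). -/
/-!
Write `M = ∫_a^b φ`. The density satisfies `φ' = -x φ`, so integrating by parts gives
`∫_a^b x φ = φ a - φ b` and `∫_a^b x² φ = M + a φ a - b φ b`, and the claim `Var < 1` becomes
`(a φ a - b φ b) M < (φ a - φ b)²`. This follows by weighting the strict bounds
`a M < ∫_a^b x φ < b M` (the conditional mean lies inside the interval) by `φ a` and `φ b`.
-/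

open MeasureTheory Set

section MeanInInterval

variable {w : ℝ → ℝ} {a b : ℝ}

theorem mul_integral_lt_integral_id_mul (hab : a < b) (hw : ContinuousOn w (Icc a b))
    (hpos : ∀ x ∈ Icc a b, 0 < w x) :
    a * ∫ x in a..b, w x < ∫ x in a..b, x * w x := by
  rw [← intervalIntegral.integral_const_mul]
  refine intervalIntegral.integral_lt_integral_of_continuousOn_of_le_of_exists_lt hab
    (continuousOn_const.mul hw) (continuousOn_id.mul hw) (fun x hx => ?_)
    ⟨b, right_mem_Icc.2 hab.le, mul_lt_mul_of_pos_right hab (hpos b (right_mem_Icc.2 hab.le))⟩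
  exact mul_le_mul_of_nonneg_right hx.1.le (hpos x (Ioc_subset_Icc_self hx)).le

theorem integral_id_mul_lt_mul_integral (hab : a < b) (hw : ContinuousOn w (Icc a b))
    (hpos : ∀ x ∈ Icc a b, 0 < w x) :
    ∫ x in a..b, x * w x < b * ∫ x in a..b, w x := by
  rw [← intervalIntegral.integral_const_mul]
  refine intervalIntegral.integral_lt_integral_of_continuousOn_of_le_of_exists_lt hab
    (continuousOn_id.mul hw) (continuousOn_const.mul hw) (fun x hx => ?_)
    ⟨a, left_mem_Icc.2 hab.le, mul_lt_mul_of_pos_right hab (hpos a (left_mem_Icc.2 hab.le))⟩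
  exact mul_le_mul_of_nonneg_right hx.2 (hpos x (Ioc_subset_Icc_self hx)).le

end MeanInInterval

section GaussianODE

variable {φ : ℝ → ℝ} (hφ' : ∀ x, HasDerivAt φ (-(x * φ x)) x) (a b : ℝ)
include hφ'

theorem integral_id_mul_of_hasDerivAt_neg_id_mul :
    ∫ x in a..b, x * φ x = φ a - φ b := by
  have hc : Continuous φ := Differentiable.continuous fun x => (hφ' x).differentiableAt
  rw [intervalIntegral.integral_eq_sub_of_hasDerivAt (f := fun y => -φ y)
    (fun x _ => (hφ' x).neg.congr_deriv (neg_neg _))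
    ((by fun_prop : Continuous fun x => x * φ x).intervalIntegrable _ _)]
  ring

theorem integral_sq_mul_of_hasDerivAt_neg_id_mul :
    ∫ x in a..b, x ^ 2 * φ x = (∫ x in a..b, φ x) + (a * φ a - b * φ b) := by
  have hc : Continuous φ := Differentiable.continuous fun x => (hφ' x).differentiableAt
  have hparts : ∫ x in a..b, (x ^ 2 * φ x - φ x) = a * φ a - b * φ b := by
    rw [intervalIntegral.integral_eq_sub_of_hasDerivAt (f := fun y => -(y * φ y))
      (fun x _ => ((hasDerivAt_id x).mul (hφ' x)).neg.congr_deriv (by simp only [id]; ring))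
      ((by fun_prop : Continuous fun x => x ^ 2 * φ x - φ x).intervalIntegrable _ _)]
    ring
  rw [intervalIntegral.integral_sub
    ((by fun_prop : Continuous fun x => x ^ 2 * φ x).intervalIntegrable _ _)
    (hc.intervalIntegrable _ _)] at hparts
  linarith

theorem conditional_variance_lt_one_of_hasDerivAt_neg_id_mul (hφpos : ∀ x, 0 < φ x)
    (hab : a < b) :
    (∫ x in a..b, x ^ 2 * φ x) / (∫ x in a..b, φ x) -
      ((∫ x in a..b, x * φ x) / (∫ x in a..b, φ x)) ^ 2 < 1 := by
  have hc : Continuous φ := Differentiable.continuous fun x => (hφ' x).differentiableAt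
  have hM : 0 < ∫ x in a..b, φ x :=
    intervalIntegral.intervalIntegral_pos_of_pos_on (hc.intervalIntegrable _ _)
      (fun x _ => hφpos x) hab
  have hlow := mul_integral_lt_integral_id_mul hab hc.continuousOn fun x _ => hφpos x
  have hupp := integral_id_mul_lt_mul_integral hab hc.continuousOn fun x _ => hφpos x
  rw [integral_id_mul_of_hasDerivAt_neg_id_mul hφ'] at hlow hupp
  rw [integral_sq_mul_of_hasDerivAt_neg_id_mul hφ', integral_id_mul_of_hasDerivAt_neg_id_mul hφ']
  rw [div_pow, div_sub_div _ _ hM.ne' (pow_pos hM 2).ne', div_lt_one (mul_pos hM (pow_pos hM 2))]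
  nlinarith [mul_lt_mul_of_pos_right hlow (hφpos a), mul_lt_mul_of_pos_right hupp (hφpos b)]

end GaussianODE

theorem hasDerivAt_const_mul_exp_neg_sq_div_two (c x : ℝ) :
    HasDerivAt (fun y => c * Real.exp (-y ^ 2 / 2)) (-(x * (c * Real.exp (-x ^ 2 / 2)))) x := by
  have hexp := (((hasDerivAt_pow 2 x).neg).div_const 2).exp.const_mul c
  exact hexp.congr_deriv (by simp only [Pi.neg_apply]; ring)

theorem setIntegral_Ioi_sub_setIntegral_Ioi {f : ℝ → ℝ} (hf : Integrable f) {a b : ℝ}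
    (hab : a ≤ b) :
    (∫ x in Ioi a, f x) - ∫ x in Ioi b, f x = ∫ x in a..b, f x := by
  rw [intervalIntegral.integral_of_le hab, ← Ioc_union_Ioi_eq_Ioi hab,
    setIntegral_union (Ioc_disjoint_Ioi le_rfl) measurableSet_Ioi hf.integrableOn
      hf.integrableOn]
  ring

theorem stmt_12_general (φ : ℝ → ℝ) (α : ℝ → ℝ)
    (hφ : ∀ x, φ x = (Real.sqrt (2 * Real.pi))⁻¹ * Real.exp (-x ^ 2 / 2))
    (hα : ∀ z, α z = ∫ x in Set.Ioi z, φ x)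
    (z_l z_u : ℝ) (hlt : z_l < z_u) :
    (∫ x in z_l..z_u, x ^ 2 * φ x) / (α z_l - α z_u) -
      ((∫ x in z_l..z_u, x * φ x) / (α z_l - α z_u)) ^ 2 < 1 := by
  obtain rfl : φ = fun x => (Real.sqrt (2 * Real.pi))⁻¹ * Real.exp (-x ^ 2 / 2) := funext hφ
  have hint : Integrable fun x => (Real.sqrt (2 * Real.pi))⁻¹ * Real.exp (-x ^ 2 / 2) := by
    simpa [div_eq_inv_mul, neg_mul] using
      (integrable_exp_neg_mul_sq (by norm_num : (0 : ℝ) < 1 / 2)).const_mul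
        (Real.sqrt (2 * Real.pi))⁻¹
  rw [hα, hα, setIntegral_Ioi_sub_setIntegral_Ioi hint hlt.le]
  exact conditional_variance_lt_one_of_hasDerivAt_neg_id_mul
    (hasDerivAt_const_mul_exp_neg_sq_div_two _) _ _ (fun x => by positivity) hlt

/-- The variance of a standard normal conditioned on an interval `(z_l, z_u]` of
positive probability is strictly less than 1 (the unconditional variance):
`E[X² | X ∈ (z_l,z_u]] - (E[X | X ∈ (z_l,z_u]])² < 1`. -/
theorem stmt_12 (φ : ℝ → ℝ) (α : ℝ → ℝ)
    (hφ : ∀ x, φ x = (Real.sqrt (2 * Real.pi))⁻¹ * Real.exp (-x ^ 2 / 2))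
    (hα : ∀ z, α z = ∫ x in Set.Ioi z, φ x)
    (z_l z_u : ℝ) (hlt : z_l < z_u) (hpos : 0 < α z_l - α z_u) :
    (∫ x in z_l..z_u, x ^ 2 * φ x) / (α z_l - α z_u) -
      ((∫ x in z_l..z_u, x * φ x) / (α z_l - α z_u)) ^ 2 < 1 :=
  stmt_12_general φ α hφ hα z_l z_u hlt
end
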